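/- arXiv:1909.03643 — 2 statements merged into one kernel-verified Lean document; each statement's English description precedes it below -/
import Mathlib

section
/- Let Γ be a finite multiset of real numbers, t ∈ ℝ, δ > 0, and A ≥ 0 such that every closed interval of length δ contains at most A elements of Γ (counted with multiplicity). Then for every b > 0, Σ_{γ ∈ Γ, |t − γ| > b} 1/(t − γ)² ≤ 2A (1/b² + 1/(δ b)). -/
/-!
Cut the range `|t - γ| > b` into the half-open bands `b + kδ < |t - γ| ≤ b + (k+1)δ`. Each band is
covered by two closed intervals of length `δ`, so it holds at most `2A` points, each contributing
at most `1 / (b + kδ)²`. Rather than summing over `k`, induct on the number of bands, moving `b`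
to `b + δ`: the bound `F b = 2A (1/b² + 1/(δ b))` absorbs one band because
`1/(b+δ)² + 1/(δ(b+δ)) ≤ 1/(δ b)`, i.e. `b (b + 2δ) ≤ (b + δ)²`.
-/

open Multiset

lemma one_div_sq_add_one_div_mul_le {b δ : ℝ} (hb : 0 < b) (hδ : 0 < δ) :
    1 / (b + δ) ^ 2 + 1 / (δ * (b + δ)) ≤ 1 / (δ * b) := by
  rw [div_add_div _ _ (by positivity) (by positivity),
    div_le_div_iff₀ (by positivity) (by positivity)]
  nlinarith [sq_nonneg δ, mul_pos hb hδ]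

section Bands

variable (Γ : Multiset ℝ) (t δ A : ℝ)

lemma card_filter_band_le
    (hcount : ∀ x : ℝ, ((Γ.filter (fun γ => x ≤ γ ∧ γ ≤ x + δ)).card : ℝ) ≤ A) (b : ℝ) :
    ((Γ.filter (fun γ => b < |t - γ| ∧ |t - γ| ≤ b + δ)).card : ℝ) ≤ 2 * A := by
  set band := Γ.filter (fun γ => b < |t - γ| ∧ |t - γ| ≤ b + δ)
  have right : band.filter (t < ·) ≤ Γ.filter (fun γ => t + b ≤ γ ∧ γ ≤ t + b + δ) := by
    rw [filter_filter]
    refine monotone_filter_right Γ fun γ ⟨hγ, hlo, hhi⟩ => ?_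
    rw [abs_sub_comm, abs_of_pos (sub_pos.2 hγ)] at hlo hhi
    constructor <;> linarith
  have left : band.filter (¬t < ·) ≤ Γ.filter (fun γ => t - b - δ ≤ γ ∧ γ ≤ t - b - δ + δ) := by
    rw [filter_filter]
    refine monotone_filter_right Γ fun γ ⟨hγ, hlo, hhi⟩ => ?_
    rw [abs_of_nonneg (sub_nonneg.2 (not_lt.1 hγ))] at hlo hhi
    constructor <;> linarith
  have hright : ((band.filter (t < ·)).card : ℝ) ≤ A :=
    le_trans (by exact_mod_cast card_le_card right) (hcount (t + b))
  have hleft : ((band.filter (¬t < ·)).card : ℝ) ≤ A :=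
    le_trans (by exact_mod_cast card_le_card left) (hcount (t - b - δ))
  rw [← filter_add_not (t < ·) band, card_add, Nat.cast_add]
  linarith

lemma sum_filter_band_le
    (hcount : ∀ x : ℝ, ((Γ.filter (fun γ => x ≤ γ ∧ γ ≤ x + δ)).card : ℝ) ≤ A)
    (b : ℝ) (hb : 0 < b) :
    ((Γ.filter (fun γ => b < |t - γ| ∧ |t - γ| ≤ b + δ)).map (fun γ => 1 / (t - γ) ^ 2)).sum
      ≤ 2 * A * (1 / b ^ 2) := by
  have hterm : ∀ x ∈ (Γ.filter (fun γ => b < |t - γ| ∧ |t - γ| ≤ b + δ)).map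
      (fun γ => 1 / (t - γ) ^ 2), x ≤ 1 / b ^ 2 := by
    simp only [mem_map, mem_filter]
    rintro _ ⟨γ, ⟨-, hlo, -⟩, rfl⟩
    rw [← sq_abs (t - γ)]
    gcongr
  refine (sum_le_card_nsmul _ _ hterm).trans ?_
  rw [card_map, nsmul_eq_mul]
  gcongr
  exact card_filter_band_le Γ t δ A hcount b

lemma filter_lt_abs_eq_band_add (hδ : 0 ≤ δ) (b : ℝ) :
    Γ.filter (fun γ => b < |t - γ|) =
      Γ.filter (fun γ => b < |t - γ| ∧ |t - γ| ≤ b + δ) + Γ.filter (fun γ => b + δ < |t - γ|) := by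
  rw [← filter_add_not (fun γ => |t - γ| ≤ b + δ) (Γ.filter (fun γ => b < |t - γ|)),
    filter_filter, filter_filter]
  congr 1
  · exact filter_congr fun _ _ => and_comm
  · exact filter_congr fun γ _ => ⟨fun h => lt_of_not_ge h.1, fun h => ⟨not_le.2 h, by linarith⟩⟩

lemma sum_filter_lt_abs_le_of_forall_abs_le (hδ : 0 < δ) (hA : 0 ≤ A)
    (hcount : ∀ x : ℝ, ((Γ.filter (fun γ => x ≤ γ ∧ γ ≤ x + δ)).card : ℝ) ≤ A)
    (N : ℕ) : ∀ b : ℝ, 0 < b → (∀ γ ∈ Γ, |t - γ| ≤ b + N * δ) →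
    ((Γ.filter (fun γ => b < |t - γ|)).map (fun γ => 1 / (t - γ) ^ 2)).sum
      ≤ 2 * A * (1 / b ^ 2 + 1 / (δ * b)) := by
  induction N with
  | zero =>
    intro b hb hΓ
    rw [filter_eq_nil.2 fun γ hγ => not_lt.2 (by simpa using hΓ γ hγ)]
    simp only [map_zero, sum_zero]
    positivity
  | succ N ih =>
    intro b hb hΓ
    have htail := ih (b + δ) (by positivity) fun γ hγ => by
      have := hΓ γ hγ
      push_cast at this
      linarith
    have hstep := mul_le_mul_of_nonneg_left (one_div_sq_add_one_div_mul_le hb hδ)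
      (by positivity : (0 : ℝ) ≤ 2 * A)
    rw [filter_lt_abs_eq_band_add Γ t δ hδ.le b, map_add, sum_add]
    linarith [sum_filter_band_le Γ t δ A hcount b hb]

end Bands

theorem stmt_8 (Γ : Multiset ℝ) (t δ A : ℝ) (hδ : 0 < δ) (hA : 0 ≤ A)
    (hcount : ∀ x : ℝ, ((Γ.filter (fun γ => x ≤ γ ∧ γ ≤ x + δ)).card : ℝ) ≤ A)
    (b : ℝ) (hb : 0 < b) :
    ((Γ.filter (fun γ => b < |t - γ|)).map (fun γ => 1 / (t - γ) ^ 2)).sum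
      ≤ 2 * A * (1 / b ^ 2 + 1 / (δ * b)) := by
  set R := (Γ.map fun γ => |t - γ|).sum
  obtain ⟨N, hN⟩ := exists_nat_ge (R / δ)
  refine sum_filter_lt_abs_le_of_forall_abs_le Γ t δ A hδ hA hcount N b hb fun γ hγ => ?_
  have hγR : |t - γ| ≤ R :=
    single_le_sum (by simp) _ (mem_map_of_mem (fun γ => |t - γ|) hγ)
  have : R ≤ N * δ := (div_le_iff₀ hδ).1 hN
  linarith
end

section
/- Let m ≥ 1 be an integer and σ ≥ 1/2, X ≥ 3 real. Then there exists an absolute constant C > 0 such that Σ_{p > X} 1/(p^{2σ} (log p)^{2m}) ≤ ( (2m+1)/(2m) + C/log X ) · X^{1−2σ} / (log X)^{2m}, where the sum is over primes p > X. -/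
/-!
Write `t = 2σ = s + 1`, `k = 2m`, `H = powLogWeight s k` and `g = powLogWeight (s + 1) (k + 1)`,
so that the summand at a prime `p > X` is `log p · g(p)`. Summation by parts against Chebyshev's
bound `θ(n) ≤ n log 4` bounds the sum over `X < p ≤ N` by
`log 4 · ((M + 1) g(M + 1) + ∑_{M + 1 < n ≤ N} g(n))` with `M = ⌊X⌋`. Since
`-H' = (s log x + k) g ≥ k g` and `g` is decreasing, the mean value theorem gives
`k g(n + 1) ≤ H(n) - H(n + 1)`, so the tail telescopes to at most `H(X) / k`, while the boundary
term is `H(M + 1) / log (M + 1) ≤ H(X) / log X`. As `log 4 ≤ 3 ≤ k + 1`, `C = 3` works.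
-/

open Real Finset

noncomputable def powLogWeight (s : ℝ) (k : ℕ) (x : ℝ) : ℝ := x ^ (-s) / log x ^ k

section powLogWeight

variable {s : ℝ} {k : ℕ}

lemma powLogWeight_nonneg {x : ℝ} (hx : 1 ≤ x) : 0 ≤ powLogWeight s k x := by
  have := log_nonneg hx
  unfold powLogWeight; positivity

lemma powLogWeight_add_one_add_one {x : ℝ} (hx : 0 < x) :
    powLogWeight (s + 1) (k + 1) x = powLogWeight s k x / (x * log x) := by
  rw [powLogWeight, powLogWeight, neg_add, rpow_add hx, rpow_neg_one, pow_succ]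
  field_simp

lemma log_mul_powLogWeight_add_one {x : ℝ} (hx : 1 < x) :
    log x * powLogWeight s (k + 1) x = 1 / (x ^ s * log x ^ k) := by
  have := log_pos hx
  rw [powLogWeight, rpow_neg (by linarith), pow_succ]
  field_simp

lemma hasDerivAt_powLogWeight {x : ℝ} (hx : 1 < x) :
    HasDerivAt (powLogWeight s k) (-(s * log x + k) * powLogWeight (s + 1) (k + 1) x) x := by
  have hx0 : 0 < x := by linarith
  have hlog : 0 < log x := log_pos hx
  have hquot := (hasDerivAt_rpow_const (p := -s) (Or.inl hx0.ne')).fun_div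
    ((hasDerivAt_log hx0.ne').fun_pow k) (by positivity)
  refine hquot.congr_deriv ?_
  rw [powLogWeight_add_one_add_one hx0, powLogWeight, rpow_sub_one hx0.ne']
  rcases k with _ | k
  · simp only [neg_mul, pow_zero, mul_one, CharP.cast_eq_zero, zero_tsub, zero_mul, mul_zero,
      sub_zero, one_pow, div_one, add_zero]
    field_simp
  · push_cast; field_simp; ring

lemma antitoneOn_powLogWeight (hs : 0 ≤ s) : AntitoneOn (powLogWeight s k) (Set.Ioi 1) := by
  refine antitoneOn_of_hasDerivWithinAt_nonpos (convex_Ioi 1)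
    (fun x hx ↦ (hasDerivAt_powLogWeight hx).continuousAt.continuousWithinAt)
    (fun x hx ↦ (hasDerivAt_powLogWeight (interior_subset hx)).hasDerivWithinAt) fun x hx ↦ ?_
  have hx : 1 < x := interior_subset hx
  have := log_pos hx
  have := powLogWeight_nonneg (s := s + 1) (k := k + 1) hx.le
  have : 0 ≤ s * log x := by positivity
  nlinarith

lemma mul_powLogWeight_le_sub (hs : 0 ≤ s) {a : ℝ} (ha : 1 < a) :
    k * powLogWeight (s + 1) (k + 1) (a + 1) ≤ powLogWeight s k a - powLogWeight s k (a + 1) := by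
  obtain ⟨c, ⟨hac, hca⟩, hslope⟩ := exists_hasDerivAt_eq_slope (powLogWeight s k) _
    (lt_add_one a)
    (fun x hx ↦ (hasDerivAt_powLogWeight (ha.trans_le hx.1)).continuousAt.continuousWithinAt)
    (fun x hx ↦ hasDerivAt_powLogWeight (ha.trans hx.1))
  have hc : 1 < c := ha.trans hac
  have hmono := antitoneOn_powLogWeight (s := s + 1) (k := k + 1) (by linarith)
    (Set.mem_Ioi.2 hc) (Set.mem_Ioi.2 (by linarith)) hca.le
  have := log_pos hc
  have := powLogWeight_nonneg (s := s + 1) (k := k + 1) hc.le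
  have : 0 ≤ s * log c := by positivity
  rw [add_sub_cancel_left, div_one] at hslope
  nlinarith

lemma mul_sum_Ioc_powLogWeight_le (hs : 0 ≤ s) {L N : ℕ} (hL : 1 < L) (hLN : L ≤ N) :
    k * ∑ n ∈ Ioc L N, powLogWeight (s + 1) (k + 1) n ≤ powLogWeight s k L := by
  suffices k * ∑ n ∈ Ioc L N, powLogWeight (s + 1) (k + 1) n + powLogWeight s k N ≤
      powLogWeight s k L by
    have hN : (1 : ℝ) ≤ N := by exact_mod_cast (hL.trans_le hLN).le
    linarith [powLogWeight_nonneg (s := s) (k := k) hN]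
  induction N, hLN using Nat.le_induction with
  | base => simp
  | succ N hLN ih =>
    have := mul_powLogWeight_le_sub (k := k) hs (a := N) (by exact_mod_cast hL.trans_le hLN)
    rw [sum_Ioc_succ_top hLN]
    push_cast
    linarith

end powLogWeight

theorem sum_Ioc_mul_le_of_sum_Icc_le {a g : ℕ → ℝ} {c : ℝ} {M N : ℕ} (hMN : M ≤ N)
    (ha : ∀ n, 0 ≤ a n) (hA : ∀ n, ∑ i ∈ Icc 0 n, a i ≤ c * n)
    (hg : ∀ n, M < n → 0 ≤ g n) (hg' : ∀ n, M < n → g (n + 1) ≤ g n) :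
    ∑ n ∈ Ioc M N, a n * g n ≤ c * (∑ n ∈ Ioc M N, g n + M * g (M + 1)) := by
  suffices ∑ n ∈ Ioc M N, a n * g n + (c * N - ∑ i ∈ Icc 0 N, a i) * g (N + 1) ≤
      c * (∑ n ∈ Ioc M N, g n + M * g (M + 1)) by
    nlinarith [hA N, hg (N + 1) (by omega)]
  induction N, hMN using Nat.le_induction with
  | base =>
    have := sum_nonneg fun i (_ : i ∈ Icc 0 M) ↦ ha i
    simp only [Ioc_self, sum_empty, zero_add]
    nlinarith [hg (M + 1) (by omega)]
  | succ N hMN ih =>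
    rw [sum_Ioc_succ_top hMN, sum_Ioc_succ_top hMN, sum_Icc_succ_top (Nat.zero_le _)]
    have := hA (N + 1)
    rw [sum_Icc_succ_top (Nat.zero_le _)] at this
    push_cast at this ⊢
    nlinarith [hg' (N + 1) (by omega)]

lemma sum_Icc_ite_prime_log_le (n : ℕ) :
    ∑ i ∈ Icc 0 n, (if i.Prime then log i else 0) ≤ log 4 * n := by
  rw [← sum_filter, ← Nat.floor_natCast (R := ℝ) n, ← Chebyshev.theta_eq_sum_Icc,
    Nat.floor_natCast]
  exact Chebyshev.theta_le_log4_mul_x (Nat.cast_nonneg _)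

theorem sum_Ioc_floor_log_mul_powLogWeight_le {s : ℝ} {k : ℕ} (hs : 0 ≤ s) (hk : 1 ≤ k)
    {X : ℝ} (hX : 1 < X) {N : ℕ} (hN : ⌊X⌋₊ < N) :
    ∑ n ∈ Ioc ⌊X⌋₊ N, (if n.Prime then log n else 0) * powLogWeight (s + 1) (k + 1) n ≤
      log 4 * (1 / k + 1 / log X) * powLogWeight s k X := by
  set M := ⌊X⌋₊
  set g : ℕ → ℝ := fun n ↦ powLogWeight (s + 1) (k + 1) n
  have hXM : X < M + 1 := Nat.lt_floor_add_one X
  have hM : 1 ≤ M := Nat.le_floor (by exact_mod_cast hX.le)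
  have hg : ∀ n, M < n → 0 ≤ g n := fun n hn ↦
    powLogWeight_nonneg (by exact_mod_cast (by omega : 1 ≤ n))
  have hg' : ∀ n, M < n → g (n + 1) ≤ g n := fun n hn ↦
    antitoneOn_powLogWeight (by linarith) (Set.mem_Ioi.2 (by exact_mod_cast (by omega : 1 < n)))
      (Set.mem_Ioi.2 (by exact_mod_cast (by omega : 1 < n + 1))) (by simp)
  have hlogX : 0 < log X := log_pos hX
  have hwX : powLogWeight s k (M + 1) ≤ powLogWeight s k X :=
    antitoneOn_powLogWeight hs (Set.mem_Ioi.2 hX) (Set.mem_Ioi.2 (by linarith)) hXM.le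
  have hfirst : (M + 1) * g (M + 1) ≤ powLogWeight s k X / log X := by
    have hpos : (0 : ℝ) < M + 1 := by positivity
    have hlog : log X ≤ log (M + 1) := log_le_log (by linarith) hXM.le
    simp only [g]
    push_cast
    rw [powLogWeight_add_one_add_one hpos, mul_div_assoc', mul_div_mul_left _ _ hpos.ne']
    exact div_le_div₀ (powLogWeight_nonneg (by linarith)) hwX hlogX hlog
  have htail : ∑ n ∈ Ioc (M + 1) N, g n ≤ powLogWeight s k X / k := by
    rw [le_div_iff₀ (by exact_mod_cast hk), mul_comm]
    exact (mul_sum_Ioc_powLogWeight_le hs (by omega) hN).trans (by exact_mod_cast hwX)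
  calc ∑ n ∈ Ioc M N, (if n.Prime then log n else 0) * g n
      ≤ log 4 * (∑ n ∈ Ioc M N, g n + M * g (M + 1)) :=
        sum_Ioc_mul_le_of_sum_Icc_le hN.le (fun n ↦ by split_ifs <;> positivity)
          sum_Icc_ite_prime_log_le hg hg'
    _ = log 4 * ((M + 1) * g (M + 1) + ∑ n ∈ Ioc (M + 1) N, g n) := by
        rw [← sum_Ioc_consecutive _ (Nat.le_succ M) hN, Nat.Ioc_succ_singleton, sum_singleton]
        ring
    _ ≤ log 4 * (powLogWeight s k X / log X + powLogWeight s k X / k) := by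
        gcongr
    _ = log 4 * (1 / k + 1 / log X) * powLogWeight s k X := by ring

lemma tsum_primes_le_of_sum_Ioc_le {F : ℕ → ℝ} {B : ℝ} {M : ℕ} (hF : ∀ n, 0 ≤ F n)
    (hFM : ∀ n ≤ M, F n = 0)
    (hB : ∀ N, M < N → ∑ n ∈ Ioc M N, (if n.Prime then F n else 0) ≤ B) :
    ∑' p : Nat.Primes, F p ≤ B := by
  refine (tsum_subtype {p : ℕ | p.Prime} F).trans_le <|
    Real.tsum_le_of_sum_range_le (fun n ↦ Set.indicator_nonneg (fun n _ ↦ hF n) n) fun N ↦ ?_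
  simp only [Set.indicator_apply, Set.mem_ofPred_eq]
  calc ∑ n ∈ range N, (if n.Prime then F n else 0)
      ≤ ∑ n ∈ range (N + M + 2), (if n.Prime then F n else 0) :=
        sum_le_sum_of_subset_of_nonneg (range_subset_range.2 (by omega))
          fun n _ _ ↦ by split_ifs <;> simp [hF]
    _ = ∑ n ∈ Ioc M (N + M + 1), (if n.Prime then F n else 0) := by
        refine (sum_subset (fun n hn ↦ mem_range.2 (by grind)) fun n hn hnM ↦ ?_).symm
        rw [hFM n (by grind), ite_self]
    _ ≤ B := hB _ (by omega)

theorem tsum_primes_gt_one_div_rpow_mul_log_pow_le {t : ℝ} {k : ℕ} (ht : 1 ≤ t) (hk : 1 ≤ k)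
    {X : ℝ} (hX : 1 < X) :
    ∑' p : Nat.Primes, (if X < (p : ℝ) then 1 / ((p : ℝ) ^ t * log p ^ k) else 0) ≤
      log 4 * (1 / k + 1 / log X) * (X ^ (1 - t) / log X ^ k) := by
  obtain ⟨s, hs, rfl⟩ : ∃ s, 0 ≤ s ∧ t = s + 1 := ⟨t - 1, by linarith, by ring⟩
  rw [show X ^ (1 - (s + 1)) / log X ^ k = powLogWeight s k X by rw [powLogWeight]; ring_nf]
  refine tsum_primes_le_of_sum_Ioc_le (M := ⌊X⌋₊)
    (F := fun n : ℕ ↦ if X < (n : ℝ) then 1 / ((n : ℝ) ^ (s + 1) * log n ^ k) else 0)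
    (fun n ↦ by split_ifs <;> positivity)
    (fun n hn ↦ if_neg (not_lt.2 ((Nat.le_floor_iff (by linarith)).1 hn))) fun N hN ↦ ?_
  refine le_of_eq_of_le (sum_congr rfl fun n hn ↦ ?_)
    (sum_Ioc_floor_log_mul_powLogWeight_le hs hk hX hN)
  have hXn : X < n := (Nat.floor_lt (by linarith)).1 (mem_Ioc.1 hn).1
  split_ifs
  · rw [log_mul_powLogWeight_add_one (hX.trans hXn)]
  · rw [zero_mul]

theorem stmt_14 : ∃ C : ℝ, 0 < C ∧
    ∀ (m : ℕ), 1 ≤ m → ∀ σ X : ℝ, 1 / 2 ≤ σ → 3 ≤ X →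
      (∑' p : Nat.Primes,
          (if X < ((p : ℕ) : ℝ) then
            1 / (((p : ℕ) : ℝ) ^ (2 * σ) * Real.log ((p : ℕ) : ℝ) ^ (2 * m))
          else 0))
        ≤ ((2 * m + 1) / (2 * m) + C / Real.log X) * X ^ (1 - 2 * σ) / Real.log X ^ (2 * m) := by
  refine ⟨3, three_pos, fun m hm σ X hσ hX ↦ ?_⟩
  have hX1 : 1 < X := by linarith
  have hlogX : 0 < log X := log_pos hX1
  have hlog4 : log 4 ≤ 3 := by linarith [log_le_sub_one_of_pos (by norm_num : (0 : ℝ) < 4)]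
  have hm' : (3 : ℝ) ≤ 2 * m + 1 := by norm_cast; omega
  refine (tsum_primes_gt_one_div_rpow_mul_log_pow_le (k := 2 * m) (by linarith) (by omega)
    hX1).trans ?_
  rw [mul_div_assoc]
  gcongr ?_ * _
  push_cast
  calc log 4 * (1 / (2 * m) + 1 / log X) ≤ 3 * (1 / (2 * m) + 1 / log X) := by gcongr
    _ = 3 / (2 * m) + 3 / log X := by ring
    _ ≤ (2 * m + 1) / (2 * m) + 3 / log X := by gcongr
end
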